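/- Let p_z and p_y be real numbers with 0 < p_y < p_z < 1/2. Then there exists ε with 0 < ε < 1/8 such that for every q with 0 < q < ε and every integer n ≥ 2, the inequality (p_z − p_y)·P_α(n,q) > (1 − 2p_z)·P_{αβ}(n,q) + (1 − p_z − p_y)·P_β(n,q) holds. -/

import Mathlib

/-!
Model: rooted binary phylogenetic trees whose edges carry substitution
probabilities, evolving binary characters (states `true` = α, `false` = β)
under the two-state symmetric (Neyman) model, and Fitch's maximum parsimony
algorithm.
-/

/-- A rooted binary tree; an internal node records the substitution
probabilities on the edges to its two children. -/
inductive PTree where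
  | leaf : PTree
  | node (p₁ p₂ : ℝ) (t₁ t₂ : PTree) : PTree

/-- The type of binary characters on a tree: an assignment of a state
(`true` = α, `false` = β) to each leaf. -/
def PTree.Char : PTree → Type
  | .leaf => Bool
  | .node _ _ t₁ t₂ => t₁.Char × t₂.Char

instance PTree.Char.instFintype : (t : PTree) → Fintype t.Char
  | .leaf => inferInstanceAs (Fintype Bool)
  | .node _ _ t₁ t₂ =>
      letI := PTree.Char.instFintype t₁
      letI := PTree.Char.instFintype t₂
      inferInstanceAs (Fintype (_ × _))

instance PTree.Char.instDecidableEq : (t : PTree) → DecidableEq t.Char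
  | .leaf => inferInstanceAs (DecidableEq Bool)
  | .node _ _ t₁ t₂ =>
      letI := PTree.Char.instDecidableEq t₁
      letI := PTree.Char.instDecidableEq t₂
      inferInstanceAs (DecidableEq (_ × _))

/-- Single-edge transition probability of the two-state symmetric model:
conditional on the parent being in state `s`, the child is in state `s'`
with probability `1 - p` if `s' = s` and `p` otherwise. -/
def transProb (p : ℝ) (s s' : Bool) : ℝ := if s' = s then 1 - p else p

/-- `t.charProb s c` is the probability that the character `c` is generated
at the leaves of `t` conditional on the root of `t` being in state `s`
(substitutions happen independently across edges). -/
def PTree.charProb : (t : PTree) → Bool → t.Char → ℝ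
  | .leaf, s, c => if (show Bool from c) = s then 1 else 0
  | .node p₁ p₂ t₁ t₂, s, c =>
      (∑ s₁ : Bool, transProb p₁ s s₁ * t₁.charProb s₁ c.1) *
      (∑ s₂ : Bool, transProb p₂ s s₂ * t₂.charProb s₂ c.2)

/-- The state set assigned to the root by Fitch's maximum parsimony
algorithm: a leaf in state `s` gets `{s}`; an internal node gets the
intersection of the children's state sets if nonempty, else their union. -/
def PTree.fitch : (t : PTree) → t.Char → Finset Bool
  | .leaf, c => {c}
  | .node _ _ t₁ t₂, c =>
      if (t₁.fitch c.1 ∩ t₂.fitch c.2).Nonempty then t₁.fitch c.1 ∩ t₂.fitch c.2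
      else t₁.fitch c.1 ∪ t₂.fitch c.2

/-- `P_α`: probability, conditional on the root being in state α, that MP
returns the state set `{α}`. -/
noncomputable def PTree.probAlpha (t : PTree) : ℝ :=
  ∑ c : t.Char, if t.fitch c = {true} then t.charProb true c else 0

/-- `P_β`: probability, conditional on the root being in state α, that MP
returns the state set `{β}`. -/
noncomputable def PTree.probBeta (t : PTree) : ℝ :=
  ∑ c : t.Char, if t.fitch c = {false} then t.charProb true c else 0

/-- `P_{αβ}`: probability, conditional on the root being in state α, that MP
returns the state set `{α, β}`. -/
noncomputable def PTree.probBoth (t : PTree) : ℝ :=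
  ∑ c : t.Char, if t.fitch c = ({true, false} : Finset Bool) then t.charProb true c else 0

/-- The reconstruction accuracy `RA = UA + AA/2` of maximum parsimony on all
leaves of `t`, the conditioning root state being the root of `t` itself. -/
noncomputable def PTree.RA (t : PTree) : ℝ := t.probAlpha + t.probBoth / 2

/-- Probability of the character `c` on `t` conditional on the state `s` of an
ancestor vertex joined to the root of `t` by an edge of substitution
probability `p`. -/
noncomputable def PTree.charProbVia (t : PTree) (p : ℝ) (s : Bool) (c : t.Char) : ℝ :=
  ∑ s' : Bool, transProb p s s' * t.charProb s' c

/-- Reconstruction accuracy of MP applied to the subtree `t` (rooted at `y`),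
where the ancestral state being estimated is that of a vertex `ρ` joined to
`y` by an edge of substitution probability `p`:
`RA = P(MP = {α} | ρ = α) + (1/2)·P(MP = {α,β} | ρ = α)`. -/
noncomputable def PTree.RAVia (t : PTree) (p : ℝ) : ℝ :=
  (∑ c : t.Char, if t.fitch c = {true} then t.charProbVia p true c else 0) +
  (∑ c : t.Char, if t.fitch c = ({true, false} : Finset Bool) then t.charProbVia p true c else 0) / 2

/-- All edge substitution probabilities lie in `[0, 1/2]`. -/
def PTree.valid : PTree → Prop
  | .leaf => True
  | .node p₁ p₂ t₁ t₂ => 0 ≤ p₁ ∧ p₁ ≤ 1/2 ∧ 0 ≤ p₂ ∧ p₂ ≤ 1/2 ∧ t₁.valid ∧ t₂.valid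

/-- The list of net substitution probabilities from the root to each leaf
(obtained by chaining the single-edge substitution probabilities). -/
def PTree.leafFlipProbs : PTree → List ℝ
  | .leaf => [0]
  | .node p₁ p₂ t₁ t₂ =>
      (t₁.leafFlipProbs.map fun r => (1 - p₁) * r + p₁ * (1 - r)) ++
      (t₂.leafFlipProbs.map fun r => (1 - p₂) * r + p₂ * (1 - r))

/-- The balanced binary tree of depth `n` with substitution probability `q`
on every edge. -/
def balanced (q : ℝ) : ℕ → PTree
  | 0 => .leaf
  | n + 1 => .node q q (balanced q n) (balanced q n)

/-- `P_α(n,q)` for the balanced tree of depth `n`. -/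
noncomputable def Palpha (n : ℕ) (q : ℝ) : ℝ := (balanced q n).probAlpha

/-- `P_β(n,q)` for the balanced tree of depth `n`. -/
noncomputable def Pbeta (n : ℕ) (q : ℝ) : ℝ := (balanced q n).probBeta

/-- `P_{αβ}(n,q)` for the balanced tree of depth `n`. -/
noncomputable def Palphabeta (n : ℕ) (q : ℝ) : ℝ := (balanced q n).probBoth

/-!
Fix the root state `s` and let `a`, `b`, `c` be the probabilities that Fitch's algorithm returns
`{s}`, `{!s}` and `{α, β}`. The state sets of the two subtrees are independent given the root,
and each subtree sees the root through one edge of substitution probability `q`, which mixes the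
two root states into `A`, `B`, `C`. The merge rule then gives `b' = B² + 2BC` and
`c' = C² + 2AB`, and for `q ≤ 1/41` these maps preserve `b ≤ 16q²`, `c ≤ 3q` (which hold at a
leaf, where `b = c = 0`). Since `P_α = 1 - P_β - P_{αβ}`, the inequality reduces to
`p_z - p_y > (1 - p_z - p_y) P_{αβ} + (1 - 2p_y) P_β`, whose right side is below `4q`.
-/

lemma Fintype.sum_prod_ite_map_eq {α β γ δ ε : Type*} [Fintype α] [Fintype β] [Fintype γ]
    [Fintype δ] [DecidableEq γ] [DecidableEq δ] [DecidableEq ε]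
    (f : α → γ) (g : β → δ) (h : γ → δ → ε) (e : ε) (w₁ : α → ℝ) (w₂ : β → ℝ) :
    ∑ ab : α × β, (if h (f ab.1) (g ab.2) = e then w₁ ab.1 * w₂ ab.2 else 0) =
      ∑ x, ∑ y, if h x y = e then
        (∑ a, if f a = x then w₁ a else 0) * (∑ b, if g b = y then w₂ b else 0) else 0 := by
  have fiber : ∀ x y, (if h x y = e then
      (∑ a, if f a = x then w₁ a else 0) * (∑ b, if g b = y then w₂ b else 0) else 0) =
      ∑ ab : α × β, if (f ab.1, g ab.2) = (x, y) then
        (if h x y = e then w₁ ab.1 * w₂ ab.2 else 0) else 0 := by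
    intro x y
    split_ifs
    · simp only [Finset.sum_mul_sum, Fintype.sum_prod_type, ite_zero_mul_ite_zero, Prod.mk.injEq]
    · simp only [ite_self, Finset.sum_const_zero]
  simp only [fiber]
  rw [← Fintype.sum_prod_type', Finset.sum_comm]
  simp only [Prod.mk.eta, Finset.sum_ite_eq, Finset.mem_univ, if_true]

lemma Fintype.sum_finset_bool (f : Finset Bool → ℝ) :
    ∑ u, f u = f ∅ + f {true} + f {false} + f {true, false} := by
  rw [show (Finset.univ : Finset (Finset Bool)) = {∅, {true}, {false}, {true, false}} by decide,
    Finset.sum_insert (by decide), Finset.sum_insert (by decide),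
    Finset.sum_insert (by decide), Finset.sum_singleton, add_assoc, add_assoc]

namespace PTree

lemma sum_transProb (p : ℝ) (s : Bool) : ∑ s' : Bool, transProb p s s' = 1 := by
  cases s <;> simp [transProb]

lemma transProb_nonneg {p : ℝ} (hp₀ : 0 ≤ p) (hp₁ : p ≤ 1) (s s' : Bool) :
    0 ≤ transProb p s s' := by
  unfold transProb
  split <;> linarith

lemma sum_charProb (t : PTree) (s : Bool) : ∑ c : t.Char, t.charProb s c = 1 := by
  induction t generalizing s with
  | leaf =>
    change ∑ c : Bool, _ = 1
    cases s <;> simp [charProb]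
  | node p₁ p₂ t₁ t₂ ih₁ ih₂ =>
    have via : ∀ (t : PTree) (p : ℝ), (∀ s, ∑ c : t.Char, t.charProb s c = 1) →
        ∑ c : t.Char, t.charProbVia p s c = 1 := fun t p ih => by
      simp only [charProbVia]
      rw [Finset.sum_comm]
      simp only [← Finset.mul_sum, ih, mul_one, sum_transProb]
    change ∑ c : t₁.Char × t₂.Char, t₁.charProbVia p₁ s c.1 * t₂.charProbVia p₂ s c.2 = 1
    rw [Fintype.sum_prod_type, ← Finset.sum_mul_sum, via t₁ p₁ ih₁, via t₂ p₂ ih₂, one_mul]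

lemma charProb_nonneg {t : PTree} (ht : t.valid) (s : Bool) (c : t.Char) :
    0 ≤ t.charProb s c := by
  induction t generalizing s with
  | leaf =>
    change (0 : ℝ) ≤ if _ then 1 else 0
    split <;> norm_num
  | node p₁ p₂ t₁ t₂ ih₁ ih₂ =>
    obtain ⟨hp₁, hp₁', hp₂, hp₂', ht₁, ht₂⟩ := ht
    exact mul_nonneg
      (Finset.sum_nonneg fun s' _ =>
        mul_nonneg (transProb_nonneg hp₁ (by linarith) _ _) (ih₁ ht₁ s' c.1))
      (Finset.sum_nonneg fun s' _ =>
        mul_nonneg (transProb_nonneg hp₂ (by linarith) _ _) (ih₂ ht₂ s' c.2))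

lemma fitch_nonempty (t : PTree) (c : t.Char) : (t.fitch c).Nonempty := by
  induction t with
  | leaf => exact Finset.singleton_nonempty _
  | node p₁ p₂ t₁ t₂ ih₁ ih₂ =>
    change (if _ then _ else _ : Finset Bool).Nonempty
    split
    · assumption
    · exact (ih₁ c.1).mono Finset.subset_union_left

noncomputable def fitchProb (t : PTree) (u : Finset Bool) (s : Bool) : ℝ :=
  ∑ c : t.Char, if t.fitch c = u then t.charProb s c else 0

noncomputable def fitchProbVia (t : PTree) (p : ℝ) (u : Finset Bool) (s : Bool) : ℝ :=
  ∑ c : t.Char, if t.fitch c = u then t.charProbVia p s c else 0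

def fitchMerge (u₁ u₂ : Finset Bool) : Finset Bool :=
  if (u₁ ∩ u₂).Nonempty then u₁ ∩ u₂ else u₁ ∪ u₂

lemma sum_fitchProb (t : PTree) (s : Bool) : ∑ u, t.fitchProb u s = 1 := by
  simp only [fitchProb]
  rw [Finset.sum_comm]
  simp only [Finset.sum_ite_eq, Finset.mem_univ, if_true, sum_charProb]

lemma fitchProb_nonneg {t : PTree} (ht : t.valid) (u : Finset Bool) (s : Bool) :
    0 ≤ t.fitchProb u s :=
  Finset.sum_nonneg fun c _ => by
    split
    · exact charProb_nonneg ht s c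
    · exact le_rfl

lemma fitchProb_le_one {t : PTree} (ht : t.valid) (u : Finset Bool) (s : Bool) :
    t.fitchProb u s ≤ 1 :=
  t.sum_fitchProb s ▸
    Finset.single_le_sum (fun v _ => fitchProb_nonneg ht v s) (Finset.mem_univ u)

lemma fitchProb_empty (t : PTree) (s : Bool) : t.fitchProb ∅ s = 0 :=
  Finset.sum_eq_zero fun c _ => if_neg (t.fitch_nonempty c).ne_empty

lemma fitchProb_partition (t : PTree) (s : Bool) :
    t.fitchProb {true} s + t.fitchProb {false} s + t.fitchProb {true, false} s = 1 := by
  simpa only [Fintype.sum_finset_bool, fitchProb_empty, zero_add] using t.sum_fitchProb s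

lemma leaf_fitchProb (u : Finset Bool) (s : Bool) :
    leaf.fitchProb u s = if {s} = u then 1 else 0 := by
  change ∑ c : Bool, (if {c} = u then (if c = s then 1 else 0) else 0 : ℝ) = _
  cases s <;> simp

lemma fitchProbVia_eq (t : PTree) (p : ℝ) (u : Finset Bool) (s : Bool) :
    t.fitchProbVia p u s = (1 - p) * t.fitchProb u s + p * t.fitchProb u (!s) := by
  have : t.fitchProbVia p u s = ∑ s', transProb p s s' * t.fitchProb u s' := by
    simp only [fitchProbVia, fitchProb, charProbVia, Finset.mul_sum, mul_ite, mul_zero]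
    rw [Finset.sum_comm]
    simp only [Finset.sum_ite_irrel, Finset.sum_const_zero]
  rw [this, Fintype.sum_bool]
  cases s <;> simp [transProb, add_comm]

lemma fitchProbVia_empty (t : PTree) (p : ℝ) (s : Bool) : t.fitchProbVia p ∅ s = 0 := by
  simp [fitchProbVia_eq, fitchProb_empty]

section node

variable (p₁ p₂ : ℝ) (t₁ t₂ : PTree) (s : Bool)

lemma fitchProb_node (u : Finset Bool) :
    (node p₁ p₂ t₁ t₂).fitchProb u s = ∑ u₁, ∑ u₂, if fitchMerge u₁ u₂ = u then
      t₁.fitchProbVia p₁ u₁ s * t₂.fitchProbVia p₂ u₂ s else 0 := by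
  change ∑ c : t₁.Char × t₂.Char, (if fitchMerge (t₁.fitch c.1) (t₂.fitch c.2) = u then
    t₁.charProbVia p₁ s c.1 * t₂.charProbVia p₂ s c.2 else 0) = _
  exact Fintype.sum_prod_ite_map_eq t₁.fitch t₂.fitch fitchMerge u _ _

lemma fitchProb_node_singleton (x : Bool) :
    (node p₁ p₂ t₁ t₂).fitchProb {x} s =
      t₁.fitchProbVia p₁ {x} s * t₂.fitchProbVia p₂ {x} s +
      t₁.fitchProbVia p₁ {x} s * t₂.fitchProbVia p₂ {true, false} s +
      t₁.fitchProbVia p₁ {true, false} s * t₂.fitchProbVia p₂ {x} s := by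
  rw [fitchProb_node]
  simp only [Fintype.sum_finset_bool, fitchProbVia_empty, zero_mul, mul_zero]
  cases x <;> simp +decide

lemma fitchProb_node_pair (x : Bool) :
    (node p₁ p₂ t₁ t₂).fitchProb {true, false} s =
      t₁.fitchProbVia p₁ {x} s * t₂.fitchProbVia p₂ {!x} s +
      t₁.fitchProbVia p₁ {!x} s * t₂.fitchProbVia p₂ {x} s +
      t₁.fitchProbVia p₁ {true, false} s * t₂.fitchProbVia p₂ {true, false} s := by
  rw [fitchProb_node]
  simp only [Fintype.sum_finset_bool, fitchProbVia_empty, zero_mul, mul_zero]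
  cases x <;> simp +decide [add_comm]

end node

end PTree

open PTree

lemma balanced_valid {q : ℝ} (hq₀ : 0 ≤ q) (hq : q ≤ 1 / 2) (n : ℕ) : (balanced q n).valid := by
  induction n with
  | zero => trivial
  | succ n ih => exact ⟨hq₀, hq, hq₀, hq, ih, ih⟩

lemma misassigned_step_le {q B C : ℝ} (hq₀ : 0 ≤ q) (hq : q ≤ 1 / 41) (hB₀ : 0 ≤ B)
    (hB : B ≤ q + 16 * q ^ 2) (hC₀ : 0 ≤ C) (hC : C ≤ 3 * q) :
    B * B + B * C + C * B ≤ 16 * q ^ 2 := by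
  have hBB : B * B ≤ (q + 16 * q ^ 2) * (q + 16 * q ^ 2) := mul_self_le_mul_self hB₀ hB
  have hBC : B * C ≤ (q + 16 * q ^ 2) * (3 * q) := mul_le_mul hB hC hC₀ (by positivity)
  nlinarith [mul_nonneg (sub_nonneg.2 hq) (pow_nonneg hq₀ 2),
    mul_nonneg (sub_nonneg.2 hq) (pow_nonneg hq₀ 3)]

lemma ambiguous_step_le {q A B C : ℝ} (hq₀ : 0 ≤ q) (hq : q ≤ 1 / 41) (hA : A ≤ 1)
    (hB₀ : 0 ≤ B) (hB : B ≤ q + 16 * q ^ 2) (hC₀ : 0 ≤ C) (hC : C ≤ 3 * q) :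
    A * B + B * A + C * C ≤ 3 * q := by
  have hAB : A * B ≤ 1 * (q + 16 * q ^ 2) := mul_le_mul hA hB hB₀ zero_le_one
  have hCC : C * C ≤ (3 * q) * (3 * q) := mul_self_le_mul_self hC₀ hC
  nlinarith [mul_nonneg (sub_nonneg.2 hq) hq₀]

lemma balanced_fitchProb_le {q : ℝ} (hq₀ : 0 ≤ q) (hq : q ≤ 1 / 41) (n : ℕ) (s : Bool) :
    (balanced q n).fitchProb {!s} s ≤ 16 * q ^ 2 ∧
      (balanced q n).fitchProb {true, false} s ≤ 3 * q := by
  induction n generalizing s with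
  | zero =>
    rw [balanced, leaf_fitchProb, leaf_fitchProb]
    cases s <;> simp +decide [hq₀]
  | succ n ih =>
    have hv := balanced_valid hq₀ (by linarith) n
    have nonneg := fun u s => fitchProb_nonneg hv u s
    have le_one := fun u s => fitchProb_le_one hv u s
    have via_nonneg : ∀ u, 0 ≤ (balanced q n).fitchProbVia q u s := fun u => by
      rw [fitchProbVia_eq]
      nlinarith [nonneg u s, nonneg u (!s)]
    have hA : (balanced q n).fitchProbVia q {s} s ≤ 1 := by
      rw [fitchProbVia_eq]
      nlinarith [le_one {s} s, le_one {s} (!s)]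
    have hB : (balanced q n).fitchProbVia q {!s} s ≤ q + 16 * q ^ 2 := by
      rw [fitchProbVia_eq]
      nlinarith [(ih s).1, le_one {!s} (!s), nonneg {!s} s]
    have hC : (balanced q n).fitchProbVia q {true, false} s ≤ 3 * q := by
      rw [fitchProbVia_eq]
      nlinarith [(ih s).2, (ih (!s)).2]
    rw [balanced, fitchProb_node_singleton, fitchProb_node_pair (x := s)]
    exact ⟨misassigned_step_le hq₀ hq (via_nonneg _) hB (via_nonneg _) hC,
      ambiguous_step_le hq₀ hq hA (via_nonneg _) hB (via_nonneg _) hC⟩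

lemma Palpha_add_Pbeta_add_Palphabeta (n : ℕ) (q : ℝ) :
    Palpha n q + Pbeta n q + Palphabeta n q = 1 :=
  (balanced q n).fitchProb_partition true

/-- for `0 < p_y < p_z < 1/2` there is `ε` with `0 < ε < 1/8`
such that for all `0 < q < ε` and all integers `n ≥ 2`,
`(p_z − p_y)·P_α(n,q) > (1 − 2p_z)·P_{αβ}(n,q) + (1 − p_z − p_y)·P_β(n,q)`. -/
theorem stmt13 (pz py : ℝ) (h0 : 0 < py) (h1 : py < pz) (h2 : pz < 1/2) :
    ∃ ε : ℝ, 0 < ε ∧ ε < 1/8 ∧ ∀ q : ℝ, 0 < q → q < ε → ∀ n : ℕ, 2 ≤ n →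
      (pz - py) * Palpha n q >
        (1 - 2*pz) * Palphabeta n q + (1 - pz - py) * Pbeta n q := by
  refine ⟨(pz - py) / 41, by linarith, by linarith, fun q hq₀ hq n _ => ?_⟩
  have hq' : q ≤ 1 / 41 := by linarith
  have hβ : Pbeta n q ≤ 16 * q ^ 2 := (balanced_fitchProb_le hq₀.le hq' n true).1
  have hαβ : Palphabeta n q ≤ 3 * q := (balanced_fitchProb_le hq₀.le hq' n true).2
  have hv := balanced_valid hq₀.le (by linarith) n
  have hα : Palpha n q = 1 - Pbeta n q - Palphabeta n q := by
    linarith [Palpha_add_Pbeta_add_Palphabeta n q]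
  have hβ₀ : 0 ≤ Pbeta n q := fitchProb_nonneg hv _ _
  have hαβ₀ : 0 ≤ Palphabeta n q := fitchProb_nonneg hv _ _
  rw [hα]
  nlinarith [mul_nonneg hβ₀ (by linarith : (0:ℝ) ≤ pz + py),
    mul_nonneg hαβ₀ (by linarith : (0:ℝ) ≤ 2 * pz)]
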